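/- Let ρ be an extremal ray of σ with primitive lattice generator n_ρ, and let F = σ∨ ∩ n_ρ^⊥ be the corresponding facet of σ∨. Then the following are equivalent: (1) F is almost saturated, i.e. F contains a saturation point of P; (2) there exists a Demazure root e associated to ρ such that (P + e) ∩ P_sat ⊆ P, i.e. the derivation ∂_e(χ^m) = ⟨m, n_ρ⟩·χ^{m+e} of K[P_sat] restricts to a well-defined locally nilpotent derivation of K[P]. -/

import Mathlib

set_option synthInstance.maxHeartbeats 1000000
set_option maxHeartbeats 1000000

noncomputable section

namespace ToricML

open Finsupp

/-- The Laurent polynomial algebra `K[M]`, where `M = ℤⁿ`. -/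
abbrev Laurent (K : Type) [Field K] (n : ℕ) := AddMonoidAlgebra K (Fin n → ℤ)

/-- The character `χ^m` in `K[M]`. -/
def chi (K : Type) [Field K] (n : ℕ) (m : Fin n → ℤ) : Laurent K n := AddMonoidAlgebra.single m 1

/-- The monoid algebra `K[P] = ⊕_{m ∈ P} K·χ^m` as a subalgebra of `K[M]`. -/
def monAlg (K : Type) [Field K] (n : ℕ) (P : AddSubmonoid (Fin n → ℤ)) :
    Subalgebra K (Laurent K n) where
  carrier := {f | ∀ m ∈ f.coeff.support, m ∈ P}
  mul_mem' := by
    classical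
    intro a b ha hb m hm
    have h := AddMonoidAlgebra.support_coeff_mul_subset a b hm
    rw [Finset.mem_add] at h
    obtain ⟨x, hx, y, hy, rfl⟩ := h
    exact P.add_mem (ha _ hx) (hb _ hy)
  add_mem' := by
    intro a b ha hb m hm
    rcases Finset.mem_union.mp (Finsupp.support_add hm) with h | h
    · exact ha _ h
    · exact hb _ h
  algebraMap_mem' := by
    intro c m hm
    rw [AddMonoidAlgebra.coe_algebraMap] at hm
    have := Finsupp.support_single_subset hm
    rw [Finset.mem_singleton] at this
    rw [this]
    exact P.zero_mem

lemma chi_mem (K : Type) [Field K] (n : ℕ) (P : AddSubmonoid (Fin n → ℤ))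
    {m : Fin n → ℤ} (hm : m ∈ P) : chi K n m ∈ monAlg K n P := by
  intro x hx
  have := Finsupp.support_single_subset hx
  rw [Finset.mem_singleton] at this
  rwa [this]

/-- The character `χ^m` as an element of `K[P]`. -/
def chiP (K : Type) [Field K] (n : ℕ) (P : AddSubmonoid (Fin n → ℤ))
    (m : Fin n → ℤ) (hm : m ∈ P) : monAlg K n P :=
  ⟨chi K n m, chi_mem K n P hm⟩

/-- A derivation is locally nilpotent if every element is killed by some power. -/
def IsLND {R A : Type*} [CommRing R] [CommRing A] [Algebra R A]
    (δ : Derivation R A A) : Prop :=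
  ∀ f : A, ∃ k : ℕ, (δ.toLinearMap ^ k) f = 0

/-- A slice of a derivation is an element mapped to `1`. -/
def HasSlice {R A : Type*} [CommRing R] [CommRing A] [Algebra R A]
    (δ : Derivation R A A) : Prop :=
  ∃ s : A, δ s = 1

/-- A derivation of `K[P]` is `M`-homogeneous of degree `e` if it maps `K·χ^m`
into `K·χ^{m+e}` for all `m ∈ P`. -/
def IsHomog (K : Type) [Field K] (n : ℕ) (P : AddSubmonoid (Fin n → ℤ))
    (δ : Derivation K (monAlg K n P) (monAlg K n P)) (e : Fin n → ℤ) : Prop :=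
  ∀ (m : Fin n → ℤ) (hm : m ∈ P), ∃ c : K,
    ((δ (chiP K n P m hm) : monAlg K n P) : Laurent K n) = AddMonoidAlgebra.single (m + e) c

/-- The Makar-Limanov invariant of `K[P]`: intersection of kernels of all LNDs. -/
def ML (K : Type) [Field K] (n : ℕ) (P : AddSubmonoid (Fin n → ℤ)) :
    Set (monAlg K n P) :=
  {f | ∀ δ : Derivation K (monAlg K n P) (monAlg K n P), IsLND δ → δ f = 0}

/-- The homogeneous Makar-Limanov invariant: intersection of kernels of all
`M`-homogeneous LNDs. -/
def MLh (K : Type) [Field K] (n : ℕ) (P : AddSubmonoid (Fin n → ℤ)) :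
    Set (monAlg K n P) :=
  {f | ∀ δ : Derivation K (monAlg K n P) (monAlg K n P),
    IsLND δ → (∃ e : Fin n → ℤ, IsHomog K n P δ e) → δ f = 0}

/-- The Makar-Limanov--Freudenburg invariant: intersection of kernels of all
LNDs admitting a slice. -/
def MLstar (K : Type) [Field K] (n : ℕ) (P : AddSubmonoid (Fin n → ℤ)) :
    Set (monAlg K n P) :=
  {f | ∀ δ : Derivation K (monAlg K n P) (monAlg K n P), IsLND δ → HasSlice δ → δ f = 0}

/-- Intersection of kernels of all homogeneous LNDs admitting a slice. -/
def MLstarh (K : Type) [Field K] (n : ℕ) (P : AddSubmonoid (Fin n → ℤ)) :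
    Set (monAlg K n P) :=
  {f | ∀ δ : Derivation K (monAlg K n P) (monAlg K n P),
    IsLND δ → HasSlice δ → (∃ e : Fin n → ℤ, IsHomog K n P δ e) → δ f = 0}

/-! ### Cones -/

/-- Embedding `ℤⁿ → ℚⁿ`. -/
def toQ (n : ℕ) (m : Fin n → ℤ) : Fin n → ℚ := fun i => (m i : ℚ)

lemma toQ_add (n : ℕ) (a b : Fin n → ℤ) : toQ n (a + b) = toQ n a + toQ n b := by
  funext i; simp [toQ]

lemma toQ_nsmul (n : ℕ) (k : ℕ) (a : Fin n → ℤ) : toQ n (k • a) = (k : ℚ) • toQ n a := by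
  funext i; simp [toQ]

lemma toQ_inj {n : ℕ} {a b : Fin n → ℤ} (h : toQ n a = toQ n b) : a = b := by
  funext i
  have := congrFun h i
  simp only [toQ] at this
  exact_mod_cast this

/-- The natural pairing between `ℚⁿ` and its dual. -/
def pairQ (n : ℕ) (w v : Fin n → ℚ) : ℚ := ∑ i, w i * v i

/-- The natural pairing between `M = ℤⁿ` and `N = ℤⁿ`. -/
def pairZ (n : ℕ) (w v : Fin n → ℤ) : ℤ := ∑ i, w i * v i

/-- The cone `σ∨ = ℚ_{≥0}·P ⊆ ℚⁿ` generated by `P`. -/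
def coneOf (n : ℕ) (P : AddSubmonoid (Fin n → ℤ)) : Set (Fin n → ℚ) :=
  {x | ∃ c : ℚ, 0 ≤ c ∧ ∃ p ∈ P, x = c • toQ n p}

/-- The dual cone of a subset of `ℚⁿ`. -/
def dualCone (n : ℕ) (s : Set (Fin n → ℚ)) : Set (Fin n → ℚ) :=
  {v | ∀ w ∈ s, 0 ≤ pairQ n w v}

/-- The cone `σ ⊆ ℚⁿ` dual to `σ∨`. -/
def sigma (n : ℕ) (P : AddSubmonoid (Fin n → ℤ)) : Set (Fin n → ℚ) :=
  dualCone n (coneOf n P)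

/-- The ray `ℚ_{≥0}·v`. -/
def rayOf (n : ℕ) (v : Fin n → ℚ) : Set (Fin n → ℚ) :=
  {x | ∃ c : ℚ, 0 ≤ c ∧ x = c • v}

/-- A cone is pointed if it contains no line. -/
def IsPointed (n : ℕ) (s : Set (Fin n → ℚ)) : Prop :=
  ∀ x ∈ s, -x ∈ s → x = 0

/-- `v` generates an extremal ray of the cone `s`. -/
def IsExtremalGen (n : ℕ) (s : Set (Fin n → ℚ)) (v : Fin n → ℚ) : Prop :=
  v ≠ 0 ∧ v ∈ s ∧ ∀ x ∈ s, ∀ y ∈ s, x + y ∈ rayOf n v → x ∈ rayOf n v ∧ y ∈ rayOf n v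

/-- A primitive lattice vector: the gcd of its coordinates is `1`. -/
def IsPrimitive (n : ℕ) (u : Fin n → ℤ) : Prop :=
  Finset.univ.gcd u = 1

/-- `u` is the primitive lattice generator of an extremal ray of `σ`. -/
def IsExtGenOfSigma (n : ℕ) (P : AddSubmonoid (Fin n → ℤ)) (u : Fin n → ℤ) : Prop :=
  IsPrimitive n u ∧ IsExtremalGen n (sigma n P) (toQ n u)

/-- `e` is a Demazure root associated to the extremal ray of `σ` with primitive
generator `u`. -/
def IsDemazureRoot (n : ℕ) (P : AddSubmonoid (Fin n → ℤ)) (u e : Fin n → ℤ) : Prop :=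
  IsExtGenOfSigma n P u ∧ pairZ n e u = -1 ∧
    ∀ u' : Fin n → ℤ, IsExtGenOfSigma n P u' → u' ≠ u → 0 ≤ pairZ n e u'

lemma mem_coneOf_int (n : ℕ) (P : AddSubmonoid (Fin n → ℤ)) (m : Fin n → ℤ) :
    toQ n m ∈ coneOf n P ↔ ∃ k : ℕ, 0 < k ∧ k • m ∈ P := by
  constructor
  · rintro ⟨c, hc, p, hp, heq⟩
    refine ⟨c.den, c.pos, ?_⟩
    have hnum : (0:ℤ) ≤ c.num := Rat.num_nonneg.mpr hc
    have key : c.den • m = c.num.toNat • p := by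
      apply toQ_inj
      rw [toQ_nsmul, toQ_nsmul, heq, smul_smul]
      congr 1
      have hden : (c.den : ℚ) ≠ 0 := Nat.cast_ne_zero.mpr c.den_nz
      have h2 : (c.num : ℚ) = c * c.den := (div_eq_iff hden).mp (Rat.num_div_den c)
      have h1 : ((c.num.toNat : ℕ) : ℚ) = (c.num : ℚ) := by
        exact_mod_cast Int.toNat_of_nonneg hnum
      rw [h1, h2]
      ring
    rw [key]
    exact AddSubmonoid.nsmul_mem P hp _
  · rintro ⟨k, hk, hkm⟩
    refine ⟨(k : ℚ)⁻¹, by positivity, k • m, hkm, ?_⟩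
    rw [toQ_nsmul, smul_smul]
    rw [inv_mul_cancel₀ (by exact_mod_cast hk.ne')]
    rw [one_smul]

/-- The saturation `P_sat = σ∨ ∩ M` of `P`. -/
def Psat (n : ℕ) (P : AddSubmonoid (Fin n → ℤ)) : AddSubmonoid (Fin n → ℤ) where
  carrier := {m | toQ n m ∈ coneOf n P}
  zero_mem' := by
    refine ⟨0, le_refl 0, 0, P.zero_mem, ?_⟩
    funext i; simp [toQ]
  add_mem' := by
    intro a b ha hb
    rw [Set.mem_setOf_eq, mem_coneOf_int] at ha hb ⊢
    obtain ⟨k, hk, hka⟩ := ha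
    obtain ⟨l, hl, hlb⟩ := hb
    refine ⟨k * l, Nat.mul_pos hk hl, ?_⟩
    have : (k * l) • (a + b) = l • (k • a) + k • (l • b) := by
      rw [smul_add, smul_smul, smul_smul, mul_comm l k]
    rw [this]
    exact P.add_mem (AddSubmonoid.nsmul_mem P hka l) (AddSubmonoid.nsmul_mem P hlb k)

lemma le_Psat (n : ℕ) (P : AddSubmonoid (Fin n → ℤ)) : P ≤ Psat n P := by
  intro m hm
  exact ⟨1, zero_le_one, m, hm, (one_smul _ _).symm⟩

lemma monAlg_mono (K : Type) [Field K] (n : ℕ) {P Q : AddSubmonoid (Fin n → ℤ)}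
    (h : P ≤ Q) : monAlg K n P ≤ monAlg K n Q :=
  fun _ hf m hm => h (hf m hm)

/-- `p` is a saturation point of `P`: `(p + σ∨) ∩ M ⊆ P`. -/
def IsSatPoint (n : ℕ) (P : AddSubmonoid (Fin n → ℤ)) (p : Fin n → ℤ) : Prop :=
  p ∈ P ∧ ∀ q ∈ Psat n P, p + q ∈ P

/-- The facet of `σ∨` corresponding to the extremal ray of `σ` with primitive
generator `u`: `σ∨ ∩ u^⊥`. -/
def facet (n : ℕ) (P : AddSubmonoid (Fin n → ℤ)) (u : Fin n → ℤ) : Set (Fin n → ℚ) :=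
  {x | x ∈ coneOf n P ∧ pairQ n x (toQ n u) = 0}

/-- The intersection of all facets of `σ∨` other than the one corresponding to `u`. -/
def facetInter (n : ℕ) (P : AddSubmonoid (Fin n → ℤ)) (u : Fin n → ℤ) :
    Set (Fin n → ℚ) :=
  ⋂ u' ∈ {u' : Fin n → ℤ | IsExtGenOfSigma n P u' ∧ u' ≠ u}, facet n P u'

/-- The facet of `σ∨` corresponding to `u` is affine: it is saturated
(`F ∩ M ⊆ P`) and the intersection of all other facets is one-dimensional. -/
def IsAffineFacet (n : ℕ) (P : AddSubmonoid (Fin n → ℤ)) (u : Fin n → ℤ) : Prop :=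
  IsExtGenOfSigma n P u ∧
  (∀ m : Fin n → ℤ, toQ n m ∈ facet n P u → m ∈ P) ∧
  (∃ v : Fin n → ℚ, v ≠ 0 ∧ facetInter n P u = rayOf n v)

/-- The extremal ray of `σ∨` with primitive vector `r`, corresponding to the
affine facet of `u`, is affine. -/
def IsAffineRay (n : ℕ) (P : AddSubmonoid (Fin n → ℤ)) (u r : Fin n → ℤ) : Prop :=
  IsPrimitive n r ∧ IsExtremalGen n (coneOf n P) (toQ n r) ∧
  toQ n r ∉ facet n P u ∧
  r ∈ P ∧ pairZ n r u = 1 ∧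
  ∀ h : Fin n → ℤ, toQ n h ∈ facet n P u → h ∉ P →
    ∀ k : ℕ, 0 < k → h + k • r ∉ P

/-- `r` is the primitive vector of an affine ray of `σ∨`. -/
def IsAffineRayAbs (n : ℕ) (P : AddSubmonoid (Fin n → ℤ)) (r : Fin n → ℤ) : Prop :=
  ∃ u : Fin n → ℤ, IsAffineFacet n P u ∧ IsAffineRay n P u r

/-- The intersection `τ₀` of all affine facets of `σ∨`. -/
def affInter (n : ℕ) (P : AddSubmonoid (Fin n → ℤ)) : Set (Fin n → ℚ) :=
  ⋂ u ∈ {u : Fin n → ℤ | IsAffineFacet n P u}, facet n P u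

lemma pairQ_add_left (n : ℕ) (x y v : Fin n → ℚ) :
    pairQ n (x + y) v = pairQ n x v + pairQ n y v := by
  simp [pairQ, add_mul, Finset.sum_add_distrib]

/-- `ML*_h(K[P])` as a subalgebra of `K[P]`. -/
def MLstarhAlg (K : Type) [Field K] (n : ℕ) (P : AddSubmonoid (Fin n → ℤ)) :
    Subalgebra K (monAlg K n P) where
  carrier := MLstarh K n P
  mul_mem' := by
    intro a b ha hb δ h1 h2 h3
    rw [Derivation.leibniz, ha δ h1 h2 h3, hb δ h1 h2 h3, smul_zero, smul_zero, add_zero]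
  add_mem' := by
    intro a b ha hb δ h1 h2 h3
    rw [map_add, ha δ h1 h2 h3, hb δ h1 h2 h3, add_zero]
  algebraMap_mem' := by
    intro c δ _ _ _
    exact Derivation.map_algebraMap δ c

/-- The submonoid `P ∩ τ₀`, where `τ₀` is the intersection of all affine facets. -/
def PtauZero (n : ℕ) (P : AddSubmonoid (Fin n → ℤ)) : AddSubmonoid (Fin n → ℤ) where
  carrier := {m | m ∈ P ∧ toQ n m ∈ affInter n P}
  zero_mem' := by
    refine ⟨P.zero_mem, ?_⟩
    simp only [affInter, Set.mem_iInter]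
    intro u hu
    refine ⟨⟨0, le_refl 0, 0, P.zero_mem, ?_⟩, ?_⟩
    · funext i; simp [toQ]
    · simp [pairQ, toQ]
  add_mem' := by
    rintro a b ⟨haP, ha⟩ ⟨hbP, hb⟩
    refine ⟨P.add_mem haP hbP, ?_⟩
    simp only [affInter, Set.mem_iInter] at ha hb ⊢
    intro u hu
    obtain ⟨-, ha2⟩ := ha u hu
    obtain ⟨-, hb2⟩ := hb u hu
    refine ⟨⟨1, zero_le_one, a + b, P.add_mem haP hbP, (one_smul _ _).symm⟩, ?_⟩
    rw [toQ_add, pairQ_add_left, ha2, hb2, add_zero]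

end ToricML


namespace ToricML

/-! ### Auxiliary lemmas: bilinearity of pairings -/

section Pairing
variable (n : ℕ)

lemma pairQ_comm (x y : Fin n → ℚ) : pairQ n x y = pairQ n y x := by
  simp [pairQ, mul_comm]

lemma pairQ_add_right (x y v : Fin n → ℚ) :
    pairQ n v (x + y) = pairQ n v x + pairQ n v y := by
  simp [pairQ, mul_add, Finset.sum_add_distrib]

lemma pairQ_smul_left (c : ℚ) (x y : Fin n → ℚ) :
    pairQ n (c • x) y = c * pairQ n x y := by
  simp [pairQ, Finset.mul_sum, mul_assoc]

lemma pairQ_smul_right (c : ℚ) (x y : Fin n → ℚ) :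
    pairQ n x (c • y) = c * pairQ n x y := by
  rw [pairQ_comm, pairQ_smul_left, pairQ_comm]

lemma pairQ_zero_left (y : Fin n → ℚ) : pairQ n 0 y = 0 := by simp [pairQ]

lemma pairQ_zero_right (x : Fin n → ℚ) : pairQ n x 0 = 0 := by simp [pairQ]

lemma pairQ_neg_left (x y : Fin n → ℚ) : pairQ n (-x) y = -pairQ n x y := by
  simp [pairQ, Finset.sum_neg_distrib]

lemma pairQ_neg_right (x y : Fin n → ℚ) : pairQ n x (-y) = -pairQ n x y := by
  rw [pairQ_comm, pairQ_neg_left, pairQ_comm]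

lemma pairQ_sub_left (x y v : Fin n → ℚ) :
    pairQ n (x - y) v = pairQ n x v - pairQ n y v := by
  rw [sub_eq_add_neg, pairQ_add_left, pairQ_neg_left, sub_eq_add_neg]

lemma pairQ_sum_left {ι : Type*} (s : Finset ι) (f : ι → (Fin n → ℚ)) (y : Fin n → ℚ) :
    pairQ n (∑ i ∈ s, f i) y = ∑ i ∈ s, pairQ n (f i) y := by
  classical
  induction s using Finset.induction with
  | empty => simp [pairQ_zero_left]
  | insert a s h ih => simp [Finset.sum_insert h, pairQ_add_left, ih]

lemma pairQ_self_pos {x : Fin n → ℚ} (hx : x ≠ 0) : 0 < pairQ n x x := by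
  have h1 : 0 ≤ pairQ n x x := Finset.sum_nonneg fun i _ => mul_self_nonneg _
  rcases h1.lt_or_eq with h | h
  · exact h
  · exfalso; apply hx
    funext i
    have := (Finset.sum_eq_zero_iff_of_nonneg
      (fun j (_ : j ∈ Finset.univ) => mul_self_nonneg (x j))).mp h.symm i (Finset.mem_univ i)
    have : x i * x i = 0 := this
    simpa using mul_self_eq_zero.mp this

lemma pairQ_toQ (a b : Fin n → ℤ) :
    pairQ n (toQ n a) (toQ n b) = (pairZ n a b : ℚ) := by
  simp [pairQ, pairZ, toQ]

lemma pairZ_comm (x y : Fin n → ℤ) : pairZ n x y = pairZ n y x := by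
  simp [pairZ, mul_comm]

lemma pairZ_add_left (x y v : Fin n → ℤ) :
    pairZ n (x + y) v = pairZ n x v + pairZ n y v := by
  simp [pairZ, add_mul, Finset.sum_add_distrib]

lemma pairZ_add_right (x y v : Fin n → ℤ) :
    pairZ n v (x + y) = pairZ n v x + pairZ n v y := by
  rw [pairZ_comm, pairZ_add_left, pairZ_comm n x v, pairZ_comm n y v]

lemma pairZ_zsmul_left (c : ℤ) (x y : Fin n → ℤ) :
    pairZ n (c • x) y = c * pairZ n x y := by
  simp [pairZ, Finset.mul_sum, mul_assoc]

lemma pairZ_nsmul_left (c : ℕ) (x y : Fin n → ℤ) :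
    pairZ n (c • x) y = c * pairZ n x y := by
  simp [pairZ, Finset.mul_sum, mul_assoc]

lemma pairZ_neg_left (x y : Fin n → ℤ) : pairZ n (-x) y = -pairZ n x y := by
  simp [pairZ, Finset.sum_neg_distrib]

lemma pairZ_sub_left (x y v : Fin n → ℤ) :
    pairZ n (x - y) v = pairZ n x v - pairZ n y v := by
  rw [sub_eq_add_neg, pairZ_add_left, pairZ_neg_left, sub_eq_add_neg]

lemma toQ_zero : toQ n (0 : Fin n → ℤ) = 0 := by funext i; simp [toQ]

lemma toQ_neg (a : Fin n → ℤ) : toQ n (-a) = -toQ n a := by funext i; simp [toQ]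

lemma toQ_sub (a b : Fin n → ℤ) : toQ n (a - b) = toQ n a - toQ n b := by
  funext i; simp [toQ]

lemma toQ_zsmul (k : ℤ) (a : Fin n → ℤ) : toQ n (k • a) = (k : ℚ) • toQ n a := by
  funext i; simp [toQ]

end Pairing

end ToricML


namespace ToricML

/-! ### Basic facts about `sigma` and `coneOf` -/

section Sigma
variable (n : ℕ) (P : AddSubmonoid (Fin n → ℤ))

lemma toQ_mem_coneOf {p : Fin n → ℤ} (hp : p ∈ P) : toQ n p ∈ coneOf n P :=
  ⟨1, zero_le_one, p, hp, (one_smul _ _).symm⟩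

lemma mem_sigma_iff (v : Fin n → ℚ) :
    v ∈ sigma n P ↔ ∀ p ∈ P, 0 ≤ pairQ n (toQ n p) v := by
  constructor
  · intro hv p hp
    exact hv (toQ n p) (toQ_mem_coneOf n P hp)
  · rintro h w ⟨c, hc, p, hp, rfl⟩
    rw [pairQ_smul_left]
    exact mul_nonneg hc (h p hp)

lemma sigma_add_mem {v w : Fin n → ℚ} (hv : v ∈ sigma n P) (hw : w ∈ sigma n P) :
    v + w ∈ sigma n P := by
  intro x hx
  rw [pairQ_add_right]
  exact add_nonneg (hv x hx) (hw x hx)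

lemma sigma_smul_mem {c : ℚ} (hc : 0 ≤ c) {v : Fin n → ℚ} (hv : v ∈ sigma n P) :
    c • v ∈ sigma n P := by
  intro x hx
  rw [pairQ_smul_right]
  exact mul_nonneg hc (hv x hx)

/-- Every integer vector is a difference of two elements of `P`. -/
lemma exists_diff (hgen : AddSubgroup.closure (P : Set (Fin n → ℤ)) = ⊤)
    (m : Fin n → ℤ) : ∃ a ∈ P, ∃ b ∈ P, m = a - b := by
  have : m ∈ AddSubgroup.closure (P : Set (Fin n → ℤ)) := by rw [hgen]; trivial
  induction this using AddSubgroup.closure_induction with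
  | mem x hx => exact ⟨x, hx, 0, P.zero_mem, by simp⟩
  | zero => exact ⟨0, P.zero_mem, 0, P.zero_mem, by simp⟩
  | add x y _ _ hx hy =>
      obtain ⟨a, ha, b, hb, rfl⟩ := hx
      obtain ⟨a', ha', b', hb', rfl⟩ := hy
      exact ⟨a + a', P.add_mem ha ha', b + b', P.add_mem hb hb', by abel⟩
  | neg x _ hx =>
      obtain ⟨a, ha, b, hb, rfl⟩ := hx
      exact ⟨b, hb, a, ha, by abel⟩

/-- If a rational vector pairs to zero with everything in `P`, it is zero. -/
lemma eq_zero_of_pairQ_eq_zero (hgen : AddSubgroup.closure (P : Set (Fin n → ℤ)) = ⊤)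
    {v : Fin n → ℚ} (hv : ∀ p ∈ P, pairQ n (toQ n p) v = 0) : v = 0 := by
  have key : ∀ m : Fin n → ℤ, pairQ n (toQ n m) v = 0 := by
    intro m
    obtain ⟨a, ha, b, hb, rfl⟩ := exists_diff n P hgen m
    rw [toQ_sub, pairQ_sub_left, hv a ha, hv b hb, sub_zero]
  funext i
  have := key (Pi.single i 1)
  rw [pairQ] at this
  have h2 : ∀ j ∈ Finset.univ, j ≠ i → toQ n (Pi.single i 1) j * v j = 0 := by
    intro j _ hj
    simp [toQ, Pi.single_apply, hj]
  rw [Finset.sum_eq_single_of_mem i (Finset.mem_univ i) h2] at this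
  simpa [toQ] using this

lemma sigma_pointed (hgen : AddSubgroup.closure (P : Set (Fin n → ℤ)) = ⊤) :
    IsPointed n (sigma n P) := by
  intro v hv hnv
  apply eq_zero_of_pairQ_eq_zero n P hgen
  intro p hp
  have h1 := (mem_sigma_iff n P v).mp hv p hp
  have h2 := (mem_sigma_iff n P (-v)).mp hnv p hp
  rw [pairQ_neg_right] at h2
  linarith

lemma pairZ_nonneg_of_mem_Psat {p : Fin n → ℤ} (hp : p ∈ Psat n P)
    {w : Fin n → ℤ} (hw : toQ n w ∈ sigma n P) : 0 ≤ pairZ n p w := by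
  have := hw (toQ n p) hp
  rw [pairQ_toQ] at this
  exact_mod_cast this

/-- Bezout: a primitive vector pairs to 1 with some integer vector. -/
lemma exists_pairZ_eq_one {u : Fin n → ℤ} (hprim : IsPrimitive n u) :
    ∃ w : Fin n → ℤ, pairZ n w u = 1 := by
  classical
  set f : (Fin n → ℤ) →+ ℤ :=
    { toFun := fun x => pairZ n x u
      map_zero' := by simp [pairZ]
      map_add' := fun x y => pairZ_add_left n x y u } with hf
  set H : AddSubgroup ℤ := f.toIntLinearMap.range.toAddSubgroup with hH
  obtain ⟨g, hg⟩ := Int.subgroup_cyclic H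
  have hmemH : ∀ x : Fin n → ℤ, pairZ n x u ∈ H := by
    intro x; exact ⟨x, rfl⟩
  have hdvd : ∀ i : Fin n, g ∣ u i := by
    intro i
    have := hmemH (Pi.single i 1)
    rw [hg, AddSubgroup.mem_closure_singleton] at this
    obtain ⟨k, hk⟩ := this
    have hsingle : pairZ n (Pi.single i 1) u = u i := by
      rw [pairZ]
      rw [Finset.sum_eq_single_of_mem i (Finset.mem_univ i)
        (fun j _ hj => by simp [Pi.single_apply, hj])]
      simp
    refine ⟨k, ?_⟩
    rw [← hsingle, ← hk, smul_eq_mul]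
    ring
  have hgdvd1 : g ∣ 1 := by
    rw [← hprim]
    exact Finset.dvd_gcd fun i _ => hdvd i
  have h1H : (1 : ℤ) ∈ H := by
    rw [hg, AddSubgroup.mem_closure_singleton]
    rcases Int.isUnit_iff.mp (isUnit_of_dvd_one hgdvd1) with h | h
    · exact ⟨1, by simp [h]⟩
    · exact ⟨-1, by simp [h]⟩
  obtain ⟨w, hw⟩ := h1H
  exact ⟨w, hw⟩

end Sigma

end ToricML


namespace ToricML

lemma pairQ_sub_right (n : ℕ) (x y v : Fin n → ℚ) :
    pairQ n v (x - y) = pairQ n v x - pairQ n v y := by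
  rw [pairQ_comm, pairQ_sub_left, pairQ_comm n x v, pairQ_comm n y v]

/-! ### Farkas lemma over `ℚ` -/

theorem farkas (n : ℕ) : ∀ (k : ℕ) (a : Fin k → (Fin n → ℚ)) (x : Fin n → ℚ),
    (¬ ∃ c : Fin k → ℚ, (∀ i, 0 ≤ c i) ∧ x = ∑ i, c i • a i) →
    ∃ v : Fin n → ℚ, (∀ i, 0 ≤ pairQ n (a i) v) ∧ pairQ n x v < 0 := by
  intro k
  induction k with
  | zero =>
      intro a x hx
      have hx0 : x ≠ 0 := by
        rintro rfl
        exact hx ⟨0, fun i => le_refl 0, by simp⟩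
      refine ⟨-x, fun i => i.elim0, ?_⟩
      rw [pairQ_neg_right]
      simpa using pairQ_self_pos n hx0
  | succ k ih =>
      intro a x hx
      set A : Fin k → (Fin n → ℚ) := fun i => a i.castSucc with hA
      set L : Fin n → ℚ := a (Fin.last k) with hL
      have hxA : ¬ ∃ c : Fin k → ℚ, (∀ i, 0 ≤ c i) ∧ x = ∑ i, c i • A i := by
        rintro ⟨c, hc, rfl⟩
        refine hx ⟨fun i => Fin.lastCases 0 c i, fun i => ?_, ?_⟩
        · induction i using Fin.lastCases with
          | last => simp
          | cast i => simpa using hc i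
        · rw [Fin.sum_univ_castSucc]
          simp [hA]
      obtain ⟨v, hv, hxv⟩ := ih A x hxA
      by_cases hLv : 0 ≤ pairQ n L v
      · refine ⟨v, fun i => ?_, hxv⟩
        induction i using Fin.lastCases with
        | last => exact hLv
        | cast i => exact hv i
      · push_neg at hLv
        have hα : pairQ n L v ≠ 0 := ne_of_lt hLv
        set α : ℚ := pairQ n L v with hαdef
        have hx' : ¬ ∃ c : Fin k → ℚ, (∀ i, 0 ≤ c i) ∧
            x - (pairQ n x v / α) • L = ∑ i, c i • (A i - (pairQ n (A i) v / α) • L) := by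
          rintro ⟨c, hc, hsum⟩
          set μ : ℚ := (pairQ n x v - ∑ i, c i * pairQ n (A i) v) / α with hμdef
          have hnum : pairQ n x v - ∑ i, c i * pairQ n (A i) v < 0 := by
            have : 0 ≤ ∑ i, c i * pairQ n (A i) v :=
              Finset.sum_nonneg fun i _ => mul_nonneg (hc i) (hv i)
            linarith
          have hμpos : 0 < μ := div_pos_of_neg_of_neg hnum hLv
          have hxeq : x = (∑ i, c i • A i) + μ • L := by
            have h1 : x = (∑ i, c i • (A i - (pairQ n (A i) v / α) • L))
                + (pairQ n x v / α) • L := by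
              rw [← hsum]; abel
            rw [h1]
            have h2 : ∀ i : Fin k, c i • (A i - (pairQ n (A i) v / α) • L)
                = c i • A i - (c i * (pairQ n (A i) v / α)) • L := by
              intro i; rw [smul_sub, smul_smul]
            rw [Finset.sum_congr rfl (fun i _ => h2 i), Finset.sum_sub_distrib,
              ← Finset.sum_smul]
            have h3 : (pairQ n x v / α) - (∑ i, c i * (pairQ n (A i) v / α)) = μ := by
              rw [hμdef, sub_div, Finset.sum_div]
              congr 1
              refine Finset.sum_congr rfl fun i _ => ?_
              ring
            rw [sub_add_eq_add_sub, add_sub_assoc, ← sub_smul, h3]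
          refine hx ⟨fun i => Fin.lastCases μ c i, fun i => ?_, ?_⟩
          · induction i using Fin.lastCases with
            | last => simpa using le_of_lt hμpos
            | cast i => simpa using hc i
          · rw [Fin.sum_univ_castSucc]
            simp only [Fin.lastCases_castSucc, Fin.lastCases_last]
            exact hxeq
        obtain ⟨w, hw, hx'w⟩ := ih (fun i => A i - (pairQ n (A i) v / α) • L)
          (x - (pairQ n x v / α) • L) hx'
        refine ⟨w - (pairQ n L w / α) • v, fun i => ?_, ?_⟩
        · induction i using Fin.lastCases with
          | last =>
              rw [pairQ_sub_right, pairQ_smul_right]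
              rw [show pairQ n (a (Fin.last k)) v = α from rfl]
              rw [show pairQ n (a (Fin.last k)) w = pairQ n L w from rfl]
              rw [div_mul_cancel₀ _ hα]
              simp
          | cast i =>
              have := hw i
              rw [pairQ_sub_left, pairQ_smul_left, pairQ_comm n L w] at this
              rw [pairQ_sub_right, pairQ_smul_right]
              rw [show pairQ n (a i.castSucc) w = pairQ n (A i) w from rfl,
                show pairQ n (a i.castSucc) v = pairQ n (A i) v from rfl]
              have heq : pairQ n (A i) w - pairQ n L w / α * pairQ n (A i) v
                  = pairQ n (A i) w - pairQ n (A i) v / α * pairQ n w L := by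
                rw [pairQ_comm n w L]; ring
              rw [heq]
              linarith [this]
        · rw [pairQ_sub_right, pairQ_smul_right]
          rw [pairQ_sub_left, pairQ_smul_left, pairQ_comm n L w] at hx'w
          have heq : pairQ n x w - pairQ n L w / α * pairQ n x v
              = pairQ n x w - pairQ n x v / α * pairQ n w L := by
            rw [pairQ_comm n w L]; ring
          rw [heq]
          linarith [hx'w]

end ToricML


namespace ToricML

/-! ### Minkowski: reduction to extremal rays -/

section Minkowski
variable (n k : ℕ) (g : Fin k → (Fin n → ℚ))

/-- The set of constraints tight at `v`. -/
noncomputable def tightSet (v : Fin n → ℚ) : Finset (Fin k) := by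
  classical exact Finset.univ.filter (fun i => pairQ n (g i) v = 0)

lemma mem_tightSet {v : Fin n → ℚ} {i : Fin k} :
    i ∈ tightSet n k g v ↔ pairQ n (g i) v = 0 := by
  simp [tightSet]

/-- Moving from `v` in direction `z` (tangent to the tight constraints) until a
new constraint becomes tight. -/
lemma exists_step (v z : Fin n → ℚ) (hv : ∀ i, 0 ≤ pairQ n (g i) v)
    (hzt : ∀ i ∈ tightSet n k g v, pairQ n (g i) z = 0)
    (i₀ : Fin k) (hi₀ : pairQ n (g i₀) z < 0) :
    ∃ t : ℚ, 0 < t ∧ (∀ i, 0 ≤ pairQ n (g i) (v + t • z)) ∧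
      (tightSet n k g v).card < (tightSet n k g (v + t • z)).card := by
  classical
  set S : Finset (Fin k) := Finset.univ.filter (fun i => pairQ n (g i) z < 0) with hS
  have hSne : S.Nonempty := ⟨i₀, by simp [hS, hi₀]⟩
  have hSprop : ∀ i ∈ S, pairQ n (g i) z < 0 := by
    intro i hi; exact (Finset.mem_filter.mp hi).2
  have hSpos : ∀ i ∈ S, 0 < pairQ n (g i) v := by
    intro i hi
    rcases (hv i).lt_or_eq with h | h
    · exact h
    · exfalso
      have : i ∈ tightSet n k g v := mem_tightSet n k g |>.mpr h.symm
      have := hzt i this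
      exact absurd this (ne_of_lt (hSprop i hi))
  set R : Finset ℚ := S.image (fun i => pairQ n (g i) v / (-pairQ n (g i) z)) with hR
  have hRne : R.Nonempty := hSne.image _
  set t : ℚ := R.min' hRne with ht
  obtain ⟨j, hjS, hjt⟩ := Finset.mem_image.mp (R.min'_mem hRne)
  have htpos : 0 < t := by
    rw [ht, ← hjt]
    exact div_pos (hSpos j hjS) (by linarith [hSprop j hjS])
  refine ⟨t, htpos, ?_, ?_⟩
  · intro i
    rw [pairQ_add_right, pairQ_smul_right]
    by_cases hiz : 0 ≤ pairQ n (g i) z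
    · have : 0 ≤ t * pairQ n (g i) z := mul_nonneg htpos.le hiz
      linarith [hv i]
    · push_neg at hiz
      have hiS : i ∈ S := by simp [hS, hiz]
      have hle : t ≤ pairQ n (g i) v / (-pairQ n (g i) z) :=
        R.min'_le _ (Finset.mem_image_of_mem _ hiS)
      have hpos : 0 < -pairQ n (g i) z := by linarith
      rw [le_div_iff₀ hpos] at hle
      nlinarith
  · apply Finset.card_lt_card
    rw [Finset.ssubset_iff_of_subset]
    · refine ⟨j, ?_, ?_⟩
      · rw [mem_tightSet, pairQ_add_right, pairQ_smul_right, ht, ← hjt]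
        have hz : -pairQ n (g j) z ≠ 0 := by linarith [hSprop j hjS]
        field_simp
        rw [div_self (neg_ne_zero.mp hz)]; ring
      · rw [mem_tightSet]
        exact ne_of_gt (hSpos j hjS)
    · intro i hi
      rw [mem_tightSet] at hi ⊢
      rw [pairQ_add_right, pairQ_smul_right, hi, hzt i (mem_tightSet n k g |>.mpr hi)]
      ring

/-- Case B of Minkowski's decomposition argument. -/
lemma minkowski_caseB (hpt : IsPointed n {v | ∀ i, 0 ≤ pairQ n (g i) v})
    (x : Fin n → ℚ) (m : ℕ)
    (ih : ∀ v, (∀ i, 0 ≤ pairQ n (g i) v) → k - (tightSet n k g v).card ≤ m →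
      0 ≤ pairQ n x v)
    (v : Fin n → ℚ) (hv : ∀ i, 0 ≤ pairQ n (g i) v) (hv0 : v ≠ 0)
    (hcard : k - (tightSet n k g v).card ≤ m + 1)
    (z : Fin n → ℚ) (hzt : ∀ i ∈ tightSet n k g v, pairQ n (g i) z = 0)
    (hzD : ∀ i, 0 ≤ pairQ n (g i) z) (hznm : ¬∃ c : ℚ, z = c • v) :
    0 ≤ pairQ n x v := by
  classical
  have hz0 : z ≠ 0 := by rintro rfl; exact hznm ⟨0, by simp⟩
  -- T v ≠ univ
  have hTne : tightSet n k g v ≠ Finset.univ := by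
    intro h
    apply hv0
    apply hpt v hv
    intro i
    have : pairQ n (g i) v = 0 := (mem_tightSet n k g).mp (h ▸ Finset.mem_univ i)
    rw [pairQ_neg_right, this]; simp
  -- -z ∉ D
  have hnz : ¬∀ i, 0 ≤ pairQ n (g i) (-z) := by
    intro h
    exact hz0 (hpt z hzD h)
  push_neg at hnz
  obtain ⟨i₀, hi₀⟩ := hnz
  rw [pairQ_neg_right] at hi₀
  have hi₀' : pairQ n (g i₀) (-z) < 0 := by rw [pairQ_neg_right]; linarith
  obtain ⟨tm, htm, hvm, hcm⟩ := exists_step n k g v (-z) hv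
    (fun i hi => by rw [pairQ_neg_right, hzt i hi]; ring) i₀ hi₀'
  set vm : Fin n → ℚ := v + tm • (-z) with hvmdef
  -- t₀ and z'
  set Sc : Finset (Fin k) := Finset.univ.filter (fun i => i ∉ tightSet n k g v) with hSc
  have hScne : Sc.Nonempty := by
    have h2 : ¬ ∀ i, i ∈ tightSet n k g v := fun h => hTne (Finset.eq_univ_iff_forall.mpr h)
    push_neg at h2
    obtain ⟨i, hi⟩ := h2
    exact ⟨i, by simp [hSc, hi]⟩
  set R0 : Finset ℚ := Sc.image (fun i => pairQ n (g i) z / pairQ n (g i) v) with hR0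
  have hR0ne : R0.Nonempty := hScne.image _
  set t0 : ℚ := R0.min' hR0ne with ht0
  obtain ⟨j1, hj1S, hj1t⟩ := Finset.mem_image.mp (R0.min'_mem hR0ne)
  have hScpos : ∀ i ∈ Sc, 0 < pairQ n (g i) v := by
    intro i hi
    have hin : i ∉ tightSet n k g v := (Finset.mem_filter.mp hi).2
    rcases (hv i).lt_or_eq with h | h
    · exact h
    · exact absurd ((mem_tightSet n k g).mpr h.symm) hin
  have ht0nn : 0 ≤ t0 := by
    rw [ht0, ← hj1t]
    exact div_nonneg (hzD j1) (hScpos j1 hj1S).le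
  set z' : Fin n → ℚ := z - t0 • v with hz'def
  have hz'D : ∀ i, 0 ≤ pairQ n (g i) z' := by
    intro i
    rw [hz'def, pairQ_sub_right, pairQ_smul_right]
    by_cases hi : i ∈ tightSet n k g v
    · rw [hzt i hi, (mem_tightSet n k g).mp hi]; simp
    · have hiSc : i ∈ Sc := by simp [hSc, hi]
      have hle : t0 ≤ pairQ n (g i) z / pairQ n (g i) v :=
        R0.min'_le _ (Finset.mem_image_of_mem _ hiSc)
      have hpos := hScpos i hiSc
      rw [le_div_iff₀ hpos] at hle
      nlinarith
  have hz'card : (tightSet n k g v).card < (tightSet n k g z').card := by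
    apply Finset.card_lt_card
    rw [Finset.ssubset_iff_of_subset]
    · refine ⟨j1, ?_, (Finset.mem_filter.mp hj1S).2⟩
      rw [mem_tightSet, hz'def, pairQ_sub_right, pairQ_smul_right, ht0, ← hj1t]
      have hvne : pairQ n (g j1) v ≠ 0 := ne_of_gt (hScpos j1 hj1S)
      field_simp
      ring
    · intro i hi
      rw [mem_tightSet] at hi ⊢
      rw [hz'def, pairQ_sub_right, pairQ_smul_right, hi,
        hzt i ((mem_tightSet n k g).mpr hi)]
      ring
  have hident : vm + tm • z' = (1 - tm * t0) • v := by
    rw [hvmdef, hz'def]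
    funext j
    simp only [Pi.add_apply, Pi.smul_apply, Pi.sub_apply, Pi.neg_apply, smul_eq_mul]
    ring
  set c : ℚ := 1 - tm * t0 with hcdef
  have hcvD : ∀ i, 0 ≤ pairQ n (g i) (c • v) := by
    intro i
    rw [← hident, pairQ_add_right, pairQ_smul_right]
    exact add_nonneg (hvm i) (mul_nonneg htm.le (hz'D i))
  rcases lt_trichotomy c 0 with hc | hc | hc
  · exfalso
    apply hv0
    apply hpt v hv
    intro i
    have h1 := hcvD i
    rw [pairQ_smul_right] at h1
    rw [pairQ_neg_right]
    nlinarith [hv i]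
  · exfalso
    have h0 : vm + tm • z' = 0 := by rw [hident, hc, zero_smul]
    have hvm' : vm = -(tm • z') := eq_neg_of_add_eq_zero_left h0
    have h1 : ∀ i, 0 ≤ pairQ n (g i) (tm • z') := fun i => by
      rw [pairQ_smul_right]; exact mul_nonneg htm.le (hz'D i)
    have h2 : ∀ i, 0 ≤ pairQ n (g i) (-(tm • z')) := fun i => hvm' ▸ hvm i
    have h3 := hpt (tm • z') h1 h2
    have hz'0 : z' = 0 := by
      have h4 := congrArg (fun w => (tm⁻¹ : ℚ) • w) h3
      simpa [smul_smul, inv_mul_cancel₀ (ne_of_gt htm)] using h4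
    apply hznm
    refine ⟨t0, ?_⟩
    have := sub_eq_zero.mp (hz'def ▸ hz'0)
    exact this
  · have h1 := ih vm hvm (by omega)
    have h2 := ih z' hz'D (by omega)
    have h3 : pairQ n x vm + tm * pairQ n x z' = c * pairQ n x v := by
      rw [← pairQ_smul_right, ← pairQ_add_right, hident, pairQ_smul_right]
    nlinarith

/-- Minkowski-type reduction: nonnegativity on extremal generators implies
nonnegativity on the whole polyhedral cone. -/
theorem minkowski (hpt : IsPointed n {v | ∀ i, 0 ≤ pairQ n (g i) v})
    (x : Fin n → ℚ)
    (hx : ∀ w, IsExtremalGen n {v | ∀ i, 0 ≤ pairQ n (g i) v} w → 0 ≤ pairQ n x w) :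
    ∀ v, (∀ i, 0 ≤ pairQ n (g i) v) → 0 ≤ pairQ n x v := by
  classical
  suffices H : ∀ m : ℕ, ∀ v, (∀ i, 0 ≤ pairQ n (g i) v) →
      k - (tightSet n k g v).card ≤ m → 0 ≤ pairQ n x v by
    exact fun v hv => H k v hv (by omega)
  intro m
  induction m with
  | zero =>
      intro v hv hc
      have hk1 : (tightSet n k g v).card ≤ k := by
        have := Finset.card_le_univ (tightSet n k g v)
        simpa using this
      have huniv : tightSet n k g v = Finset.univ := by
        apply Finset.eq_univ_of_card
        simp only [Fintype.card_fin]
        omega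
      have hv0 : v = 0 := by
        apply hpt v hv
        intro i
        rw [pairQ_neg_right, (mem_tightSet n k g).mp (huniv ▸ Finset.mem_univ i)]
        simp
      rw [hv0, pairQ_zero_right]
  | succ m ih =>
      intro v hv hcard
      by_cases hv0 : v = 0
      · rw [hv0, pairQ_zero_right]
      by_cases hex : ∃ z, (∀ i ∈ tightSet n k g v, pairQ n (g i) z = 0) ∧
          ¬∃ c : ℚ, z = c • v
      · obtain ⟨z, hzt, hznm⟩ := hex
        by_cases hzD : ∀ i, 0 ≤ pairQ n (g i) z
        · exact minkowski_caseB n k g hpt x m ih v hv hv0 hcard z hzt hzD hznm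
        by_cases hnzD : ∀ i, 0 ≤ pairQ n (g i) (-z)
        · apply minkowski_caseB n k g hpt x m ih v hv hv0 hcard (-z)
            (fun i hi => by rw [pairQ_neg_right, hzt i hi]; ring) hnzD
          rintro ⟨c, hc⟩
          apply hznm
          refine ⟨-c, ?_⟩
          rw [← neg_neg z, hc, neg_smul]
        · push_neg at hzD hnzD
          obtain ⟨i₀, hi₀⟩ := hzD
          obtain ⟨i₁, hi₁⟩ := hnzD
          obtain ⟨tp, htp, hvp, hcp⟩ := exists_step n k g v z hv hzt i₀ hi₀
          obtain ⟨tm, htm, hvm, hcm⟩ := exists_step n k g v (-z) hv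
            (fun i hi => by rw [pairQ_neg_right, hzt i hi]; ring) i₁ hi₁
          have h1 := ih _ hvp (by omega)
          have h2 := ih _ hvm (by omega)
          have hident : tm • (v + tp • z) + tp • (v + tm • (-z)) = (tp + tm) • v := by
            funext j
            simp only [Pi.add_apply, Pi.smul_apply, Pi.neg_apply, smul_eq_mul]
            ring
          have h3 : tm * pairQ n x (v + tp • z) + tp * pairQ n x (v + tm • (-z))
              = (tp + tm) * pairQ n x v := by
            rw [← pairQ_smul_right, ← pairQ_smul_right, ← pairQ_add_right, hident,
              pairQ_smul_right]
          nlinarith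
      · push_neg at hex
        apply hx v
        refine ⟨hv0, hv, ?_⟩
        intro p hp q hq hpq
        obtain ⟨c', hc', hsum⟩ := hpq
        have hp' : ∀ i, 0 ≤ pairQ n (g i) p := hp
        have hq' : ∀ i, 0 ≤ pairQ n (g i) q := hq
        have hkey : ∀ i ∈ tightSet n k g v,
            pairQ n (g i) p = 0 ∧ pairQ n (g i) q = 0 := by
          intro i hi
          have h0 : pairQ n (g i) p + pairQ n (g i) q = 0 := by
            rw [← pairQ_add_right, hsum, pairQ_smul_right,
              (mem_tightSet n k g).mp hi]
            ring
          constructor <;> [skip; skip] <;> linarith [hp' i, hq' i]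
        have hray : ∀ w : Fin n → ℚ, (∀ i, 0 ≤ pairQ n (g i) w) →
            (∀ i ∈ tightSet n k g v, pairQ n (g i) w = 0) → w ∈ rayOf n v := by
          intro w hwD hwt
          obtain ⟨cw, hcw⟩ := hex w hwt
          refine ⟨cw, ?_, hcw⟩
          by_contra hneg
          push_neg at hneg
          have hnegw : ∀ i, 0 ≤ pairQ n (g i) (-w) := by
            intro i
            rw [hcw, pairQ_neg_right, pairQ_smul_right]
            nlinarith [hv i]
          have hw0 := hpt w hwD hnegw
          rw [hw0] at hcw
          have : cw • v = 0 := hcw.symm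
          rcases smul_eq_zero.mp this with h | h
          · exact absurd h (ne_of_lt hneg)
          · exact hv0 h
        exact ⟨hray p hp' (fun i hi => (hkey i hi).1),
          hray q hq' (fun i hi => (hkey i hi).2)⟩

end Minkowski

end ToricML


namespace ToricML

/-! ### Generators of `P`, primitive vectors -/

section Generators
variable (n : ℕ) (P : AddSubmonoid (Fin n → ℤ))

lemma exists_generators (hfg : P.FG) : ∃ (k : ℕ) (a : Fin k → (Fin n → ℤ)),
    (∀ i, a i ∈ P) ∧ (∀ p ∈ P, ∃ c : Fin k → ℕ, p = ∑ i, c i • a i) := by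
  classical
  obtain ⟨S, hS⟩ := hfg
  refine ⟨S.card, fun i => (S.equivFin.symm i : Fin n → ℤ), ?_, ?_⟩
  · intro i
    rw [← hS]
    exact AddSubmonoid.subset_closure (S.equivFin.symm i).2
  · intro p hp
    rw [← hS] at hp
    induction hp using AddSubmonoid.closure_induction with
    | mem x hx =>
        set j := S.equivFin ⟨x, hx⟩ with hj
        refine ⟨fun i => if i = j then 1 else 0, ?_⟩
        have : ∀ i : Fin S.card, (if i = j then (1:ℕ) else 0) • (S.equivFin.symm i : Fin n → ℤ)
            = if i = j then (S.equivFin.symm i : Fin n → ℤ) else 0 := by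
          intro i; split <;> simp
        rw [Finset.sum_congr rfl (fun i _ => this i), Finset.sum_ite_eq' Finset.univ j]
        simp [hj]
    | zero => exact ⟨0, by simp⟩
    | add x y _ _ hx hy =>
        obtain ⟨c, rfl⟩ := hx
        obtain ⟨c', rfl⟩ := hy
        exact ⟨c + c', by simp [add_smul, Finset.sum_add_distrib]⟩

/-- Extract a primitive integral vector on the ray of a nonzero rational vector. -/
lemma exists_primitive {w : Fin n → ℚ} (hw : w ≠ 0) :
    ∃ (u' : Fin n → ℤ) (c : ℚ), 0 < c ∧ toQ n u' = c • w ∧ IsPrimitive n u' := by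
  classical
  set N : ℕ := ∏ i, (w i).den with hN
  have hNpos : 0 < N := Finset.prod_pos fun i _ => (w i).pos
  set m : Fin n → ℤ := fun i => (w i).num * ∏ j ∈ Finset.univ.erase i, ((w j).den : ℤ)
    with hm
  have hmQ : toQ n m = (N : ℚ) • w := by
    funext i
    have h1 : (N : ℚ) = ((w i).den : ℚ) * ∏ j ∈ Finset.univ.erase i, ((w j).den : ℚ) := by
      rw [hN]
      push_cast
      rw [← Finset.mul_prod_erase Finset.univ _ (Finset.mem_univ i)]
    simp only [toQ, hm, Pi.smul_apply, smul_eq_mul]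
    push_cast
    rw [h1]
    have h2 : w i * ((w i).den : ℚ) = (w i).num := Rat.mul_den_eq_num (w i)
    calc ((w i).num : ℚ) * ∏ j ∈ Finset.univ.erase i, ((w j).den : ℚ)
        = (w i * ((w i).den : ℚ)) * ∏ j ∈ Finset.univ.erase i, ((w j).den : ℚ) := by rw [h2]
      _ = ((w i).den : ℚ) * (∏ j ∈ Finset.univ.erase i, ((w j).den : ℚ)) * w i := by ring
  have hm0 : m ≠ 0 := by
    intro h
    apply hw
    funext i
    have := congrFun hmQ i
    rw [h] at this
    simp only [toQ, Pi.zero_apply, Int.cast_zero, Pi.smul_apply, smul_eq_mul] at this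
    have hN0 : ((N : ℚ)) ≠ 0 := by positivity
    rcases mul_eq_zero.mp this.symm with h | h
    · exact absurd (by exact_mod_cast h) hN0
    · exact h
  set g : ℤ := Finset.univ.gcd m with hg
  have hg0 : g ≠ 0 := by
    rw [hg]
    intro h
    apply hm0
    funext i
    exact Finset.gcd_eq_zero_iff.mp h i (Finset.mem_univ i)
  have hgnn : 0 ≤ g := Int.nonneg_of_normalize_eq_self (hg ▸ Finset.normalize_gcd)
  have hgpos : 0 < g := lt_of_le_of_ne hgnn (Ne.symm hg0)
  set u' : Fin n → ℤ := fun i => m i / g with hu'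
  have hdvd : ∀ i, g ∣ m i := fun i => Finset.gcd_dvd (Finset.mem_univ i)
  have hmu : ∀ i, m i = g * u' i := by
    intro i
    rw [hu']
    rw [mul_comm, Int.ediv_mul_cancel (hdvd i)]
  refine ⟨u', (N : ℚ) / (g : ℚ), by positivity, ?_, ?_⟩
  · funext i
    have h1 := congrFun hmQ i
    simp only [toQ, Pi.smul_apply, smul_eq_mul] at h1 ⊢
    rw [hmu i] at h1
    push_cast at h1
    have hgQ : (g : ℚ) ≠ 0 := Int.cast_ne_zero.mpr hg0
    field_simp
    linarith [h1]
  · rw [IsPrimitive]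
    have h1 : Finset.univ.gcd m = g * Finset.univ.gcd u' := by
      calc Finset.univ.gcd m = Finset.univ.gcd (fun i => g * u' i) :=
            Finset.gcd_congr rfl (fun i _ => hmu i)
        _ = normalize g * Finset.univ.gcd u' := Finset.gcd_mul_left
        _ = g * Finset.univ.gcd u' := by rw [Int.normalize_of_nonneg hgnn]
    rw [← hg] at h1
    exact (mul_left_cancel₀ hg0 (by rw [mul_one, ← h1])).symm

/-- Two primitive integral vectors on the same positive ray are equal. -/
lemma prim_ray_eq {u₁ u₂ : Fin n → ℤ} (h₁ : IsPrimitive n u₁) (h₂ : IsPrimitive n u₂)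
    {c : ℚ} (hc : 0 < c) (heq : toQ n u₂ = c • toQ n u₁) : u₂ = u₁ := by
  have hb : (0:ℤ) < c.den := by exact_mod_cast c.pos
  have ha : (0:ℤ) < c.num := Rat.num_pos.mpr hc
  have hint : ∀ i, (c.den : ℤ) * u₂ i = c.num * u₁ i := by
    intro i
    have h1 := congrFun heq i
    simp only [toQ, Pi.smul_apply, smul_eq_mul] at h1
    have h2 : ((c.den : ℤ) : ℚ) * (u₂ i : ℚ) = (c.num : ℚ) * (u₁ i : ℚ) := by
      push_cast
      rw [h1]
      rw [show ((c.den:ℚ)) * (c * (u₁ i : ℚ)) = (c * (c.den:ℚ)) * (u₁ i:ℚ) by ring]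
      rw [Rat.mul_den_eq_num]
    exact_mod_cast h2
  have hgcd1 : Finset.univ.gcd (fun i => (c.den : ℤ) * u₂ i) = (c.den : ℤ) := by
    rw [Finset.gcd_mul_left, Int.normalize_of_nonneg hb.le, h₂, mul_one]
  have hgcd2 : Finset.univ.gcd (fun i => c.num * u₁ i) = c.num := by
    rw [Finset.gcd_mul_left, Int.normalize_of_nonneg ha.le, h₁, mul_one]
  have hab : (c.den : ℤ) = c.num := by
    rw [← hgcd1, ← hgcd2]
    exact Finset.gcd_congr rfl (fun i _ => hint i)
  have hc1 : c = 1 := by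
    have := Rat.num_div_den c
    rw [← this, ← hab]
    field_simp
    simp
  apply toQ_inj
  rw [heq, hc1, one_smul]

end Generators

end ToricML


namespace ToricML

section Key
variable (n : ℕ) (P : AddSubmonoid (Fin n → ℤ))

lemma mem_Psat_iff (m : Fin n → ℤ) : m ∈ Psat n P ↔ toQ n m ∈ coneOf n P := Iff.rfl

lemma toQ_natsum {k : ℕ} (c : Fin k → ℕ) (a : Fin k → (Fin n → ℤ)) :
    toQ n (∑ i, c i • a i) = ∑ i, (c i : ℚ) • toQ n (a i) := by
  funext j
  simp only [toQ, Finset.sum_apply, Pi.smul_apply, smul_eq_mul]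
  rw [Int.cast_sum]
  refine Finset.sum_congr rfl fun i _ => ?_
  rw [nsmul_eq_mul, Int.cast_mul, Int.cast_natCast]

lemma pairZ_sum_left {ι : Type*} (s : Finset ι) (f : ι → (Fin n → ℤ)) (y : Fin n → ℤ) :
    pairZ n (∑ i ∈ s, f i) y = ∑ i ∈ s, pairZ n (f i) y := by
  classical
  induction s using Finset.induction with
  | empty => simp [pairZ]
  | insert i s h ih => rw [Finset.sum_insert h, Finset.sum_insert h,
      pairZ_add_left, ih]

lemma sigma_eq_ineq {k : ℕ} (a : Fin k → (Fin n → ℤ)) (haP : ∀ i, a i ∈ P)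
    (hcomb : ∀ p ∈ P, ∃ c : Fin k → ℕ, p = ∑ i, c i • a i) :
    sigma n P = {v | ∀ i, 0 ≤ pairQ n (toQ n (a i)) v} := by
  ext v
  constructor
  · intro hv i
    exact (mem_sigma_iff n P v).mp hv (a i) (haP i)
  · intro hv
    rw [mem_sigma_iff]
    intro p hp
    obtain ⟨c, rfl⟩ := hcomb p hp
    rw [toQ_natsum, pairQ_sum_left]
    apply Finset.sum_nonneg
    intro i _
    rw [pairQ_smul_left]
    exact mul_nonneg (by positivity) (hv i)

lemma rayOf_smul {c : ℚ} (hc : 0 < c) (v : Fin n → ℚ) :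
    rayOf n (c • v) = rayOf n v := by
  ext x
  constructor
  · rintro ⟨d, hd, rfl⟩
    exact ⟨d * c, mul_nonneg hd hc.le, by rw [mul_smul]⟩
  · rintro ⟨d, hd, rfl⟩
    exact ⟨d / c, div_nonneg hd hc.le, by rw [smul_smul, div_mul_cancel₀ _ (ne_of_gt hc)]⟩

lemma extremal_smul {s : Set (Fin n → ℚ)}
    (hs : ∀ {t : ℚ} {v : Fin n → ℚ}, 0 ≤ t → v ∈ s → t • v ∈ s)
    {c : ℚ} (hc : 0 < c) {v : Fin n → ℚ} (h : IsExtremalGen n s v) :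
    IsExtremalGen n s (c • v) := by
  obtain ⟨h0, hmem, hext⟩ := h
  refine ⟨smul_ne_zero (ne_of_gt hc) h0, hs hc.le hmem, ?_⟩
  intro x hx y hy hxy
  rw [rayOf_smul n hc] at hxy ⊢
  exact hext x hx y hy hxy

lemma rat_clear_denoms {k : ℕ} (c : Fin k → ℚ) (hc : ∀ i, 0 ≤ c i) :
    ∃ (D : ℕ) (Nc : Fin k → ℕ), 0 < D ∧ ∀ i, (Nc i : ℚ) = c i * D := by
  classical
  set D : ℕ := ∏ i, (c i).den with hD
  have hDpos : 0 < D := Finset.prod_pos fun i _ => (c i).pos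
  refine ⟨D, fun i => ((c i).num * ∏ j ∈ Finset.univ.erase i, ((c j).den : ℤ)).toNat,
    hDpos, ?_⟩
  intro i
  have hnn : 0 ≤ (c i).num * ∏ j ∈ Finset.univ.erase i, ((c j).den : ℤ) := by
    apply mul_nonneg (Rat.num_nonneg.mpr (hc i))
    positivity
  have hcast : ((((c i).num * ∏ j ∈ Finset.univ.erase i, ((c j).den : ℤ)).toNat : ℕ) : ℚ)
      = ((c i).num : ℚ) * ∏ j ∈ Finset.univ.erase i, ((c j).den : ℚ) := by
    rw [show ((((c i).num * ∏ j ∈ Finset.univ.erase i, ((c j).den : ℤ)).toNat : ℕ) : ℚ)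
      = (((((c i).num * ∏ j ∈ Finset.univ.erase i, ((c j).den : ℤ)).toNat : ℕ) : ℤ) : ℚ)
      from by push_cast; ring, Int.toNat_of_nonneg hnn]
    push_cast
    ring
  rw [hcast]
  have h1 : (D : ℚ) = ((c i).den : ℚ) * ∏ j ∈ Finset.univ.erase i, ((c j).den : ℚ) := by
    rw [hD]
    push_cast
    rw [← Finset.mul_prod_erase Finset.univ _ (Finset.mem_univ i)]
  rw [h1]
  have h2 : c i * ((c i).den : ℚ) = (c i).num := Rat.mul_den_eq_num (c i)
  calc ((c i).num : ℚ) * ∏ j ∈ Finset.univ.erase i, ((c j).den : ℚ)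
      = (c i * ((c i).den : ℚ)) * ∏ j ∈ Finset.univ.erase i, ((c j).den : ℚ) := by rw [h2]
    _ = c i * (((c i).den : ℚ) * ∏ j ∈ Finset.univ.erase i, ((c j).den : ℚ)) := by ring

/-- Biduality: an integer vector pairing nonnegatively with all primitive
extremal generators of `σ` lies in `P_sat`. -/
lemma key_mem_Psat (hgen : AddSubgroup.closure (P : Set (Fin n → ℤ)) = ⊤)
    {k : ℕ} (a : Fin k → (Fin n → ℤ)) (haP : ∀ i, a i ∈ P)
    (hcomb : ∀ p ∈ P, ∃ c : Fin k → ℕ, p = ∑ i, c i • a i)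
    (x : Fin n → ℤ) (hx : ∀ u', IsExtGenOfSigma n P u' → 0 ≤ pairZ n x u') :
    x ∈ Psat n P := by
  classical
  set G : Fin k → (Fin n → ℚ) := fun i => toQ n (a i) with hG
  have hset : {v : Fin n → ℚ | ∀ i, 0 ≤ pairQ n (G i) v} = sigma n P :=
    (sigma_eq_ineq n P a haP hcomb).symm
  have hpt : IsPointed n {v : Fin n → ℚ | ∀ i, 0 ≤ pairQ n (G i) v} := by
    rw [hset]; exact sigma_pointed n P hgen
  have hxQ : ∀ w, IsExtremalGen n {v : Fin n → ℚ | ∀ i, 0 ≤ pairQ n (G i) v} w →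
      0 ≤ pairQ n (toQ n x) w := by
    intro w hw
    rw [hset] at hw
    obtain ⟨u', c, hc, hequ, hprim⟩ := exists_primitive n hw.1
    have hext : IsExtGenOfSigma n P u' := by
      refine ⟨hprim, ?_⟩
      rw [hequ]
      exact extremal_smul n (fun ht hv => sigma_smul_mem n P ht hv) hc hw
    have h1 := hx u' hext
    have h2 : 0 ≤ pairQ n (toQ n x) (toQ n u') := by
      rw [pairQ_toQ]; exact_mod_cast h1
    rw [hequ, pairQ_smul_right] at h2
    nlinarith
  have hmink := minkowski n k G hpt (toQ n x) hxQ
  by_contra hnot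
  rw [mem_Psat_iff] at hnot
  have hfar : ¬ ∃ c : Fin k → ℚ, (∀ i, 0 ≤ c i) ∧ toQ n x = ∑ i, c i • G i := by
    rintro ⟨c, hcnn, hsum⟩
    apply hnot
    obtain ⟨D, Nc, hD, hNc⟩ := rat_clear_denoms c hcnn
    rw [mem_coneOf_int]
    refine ⟨D, hD, ?_⟩
    have : D • x = ∑ i, Nc i • a i := by
      apply toQ_inj
      rw [toQ_nsmul, toQ_natsum]
      rw [hsum, Finset.smul_sum]
      refine Finset.sum_congr rfl fun i _ => ?_
      rw [smul_smul, mul_comm, ← hNc i]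
    rw [this]
    exact AddSubmonoid.sum_mem P fun i _ => AddSubmonoid.nsmul_mem P (haP i) _
  obtain ⟨v, hv, hxv⟩ := farkas n k G (toQ n x) hfar
  have := hmink v hv
  linarith

end Key

end ToricML


namespace ToricML

section Finiteness
variable (n : ℕ) (P : AddSubmonoid (Fin n → ℤ))

/-- The set of primitive extremal generators of `σ` is finite. -/
lemma ext_finite (hgen : AddSubgroup.closure (P : Set (Fin n → ℤ)) = ⊤)
    {k : ℕ} (a : Fin k → (Fin n → ℤ)) (haP : ∀ i, a i ∈ P)
    (hcomb : ∀ p ∈ P, ∃ c : Fin k → ℕ, p = ∑ i, c i • a i) :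
    {u' : Fin n → ℤ | IsExtGenOfSigma n P u'}.Finite := by
  classical
  set G : Fin k → (Fin n → ℚ) := fun i => toQ n (a i) with hG
  have hset : sigma n P = {v : Fin n → ℚ | ∀ i, 0 ≤ pairQ n (G i) v} :=
    sigma_eq_ineq n P a haP hcomb
  set Φ : (Fin n → ℤ) → Finset (Fin k) := fun u' => tightSet n k G (toQ n u') with hΦ
  have hinj : Set.InjOn Φ {u' : Fin n → ℤ | IsExtGenOfSigma n P u'} := by
    intro u₁ hu₁ u₂ hu₂ hT
    have h₁ : IsExtGenOfSigma n P u₁ := hu₁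
    have h₂ : IsExtGenOfSigma n P u₂ := hu₂
    obtain ⟨hp₁, hne₁, hm₁, hext₁⟩ := h₁
    obtain ⟨hp₂, hne₂, hm₂, hext₂⟩ := h₂
    have hD₁ : ∀ i, 0 ≤ pairQ n (G i) (toQ n u₁) := by
      rw [hset] at hm₁; exact hm₁
    have hD₂ : ∀ i, 0 ≤ pairQ n (G i) (toQ n u₂) := by
      rw [hset] at hm₂; exact hm₂
    -- the set of constraints strictly positive at u₂
    set S : Finset (Fin k) := Finset.univ.filter (fun i => 0 < pairQ n (G i) (toQ n u₂))
      with hS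
    have hSne : S.Nonempty := by
      by_contra hemp
      rw [Finset.not_nonempty_iff_eq_empty] at hemp
      apply hne₂
      have : ∀ i, pairQ n (G i) (toQ n u₂) = 0 := by
        intro i
        rcases (hD₂ i).lt_or_eq with h | h
        · exfalso
          have : i ∈ S := by simp [hS, h]
          rw [hemp] at this
          exact absurd this (Finset.notMem_empty i)
        · exact h.symm
      apply sigma_pointed n P hgen (toQ n u₂) hm₂
      rw [hset]
      intro i
      rw [pairQ_neg_right, this i]
      simp
    have hSpos₁ : ∀ i ∈ S, 0 < pairQ n (G i) (toQ n u₁) := by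
      intro i hi
      have h2 : 0 < pairQ n (G i) (toQ n u₂) := (Finset.mem_filter.mp hi).2
      rcases (hD₁ i).lt_or_eq with h | h
      · exact h
      · exfalso
        have hiT : i ∈ Φ u₁ := (mem_tightSet n k G).mpr h.symm
        rw [hT] at hiT
        have := (mem_tightSet n k G).mp hiT
        exact absurd this (ne_of_gt h2)
    set R : Finset ℚ := S.image
      (fun i => pairQ n (G i) (toQ n u₁) / pairQ n (G i) (toQ n u₂)) with hR
    have hRne : R.Nonempty := hSne.image _
    set ε : ℚ := R.min' hRne with hε
    obtain ⟨j, hjS, hjε⟩ := Finset.mem_image.mp (R.min'_mem hRne)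
    have hεpos : 0 < ε := by
      rw [hε, ← hjε]
      exact div_pos (hSpos₁ j hjS) ((Finset.mem_filter.mp hjS).2)
    set y : Fin n → ℚ := toQ n u₁ - ε • toQ n u₂ with hy
    have hyD : ∀ i, 0 ≤ pairQ n (G i) y := by
      intro i
      rw [hy, pairQ_sub_right, pairQ_smul_right]
      by_cases hi : 0 < pairQ n (G i) (toQ n u₂)
      · have hiS : i ∈ S := by simp [hS, hi]
        have hle : ε ≤ pairQ n (G i) (toQ n u₁) / pairQ n (G i) (toQ n u₂) :=
          R.min'_le _ (Finset.mem_image_of_mem _ hiS)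
        rw [le_div_iff₀ hi] at hle
        linarith
      · push_neg at hi
        nlinarith [hD₁ i, hεpos]
    have hymem : y ∈ sigma n P := by rw [hset]; exact hyD
    have hsum : y + ε • toQ n u₂ ∈ rayOf n (toQ n u₁) := by
      refine ⟨1, zero_le_one, ?_⟩
      rw [hy, one_smul]
      abel
    have hray := (hext₁ y hymem (ε • toQ n u₂)
      (sigma_smul_mem n P hεpos.le hm₂) hsum).2
    obtain ⟨c₂, hc₂, hceq⟩ := hray
    have hc₂pos : 0 < c₂ := by
      rcases hc₂.lt_or_eq with h | h
      · exact h
      · exfalso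
        apply hne₂
        have : ε • toQ n u₂ = 0 := by rw [hceq, ← h, zero_smul]
        have h2 := congrArg (fun w => (ε⁻¹ : ℚ) • w) this
        simpa [smul_smul, inv_mul_cancel₀ (ne_of_gt hεpos)] using h2
    have heq2 : toQ n u₂ = (c₂ / ε) • toQ n u₁ := by
      have h2 := congrArg (fun w => (ε⁻¹ : ℚ) • w) hceq
      simp only [smul_smul, inv_mul_cancel₀ (ne_of_gt hεpos), one_smul] at h2
      rw [h2, div_eq_inv_mul]
    exact (prim_ray_eq n (u₁ := u₁) (u₂ := u₂) hp₁ hp₂ (div_pos hc₂pos hεpos) heq2).symm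
  exact Set.Finite.of_finite_image (Set.toFinite _) hinj

end Finiteness

end ToricML


namespace ToricML

section Interior
variable (n : ℕ) (P : AddSubmonoid (Fin n → ℤ))

/-- An interior vector of `P`: pairs strictly positively with every nonzero
integral element of `σ`. -/
lemma exists_interior (hgen : AddSubgroup.closure (P : Set (Fin n → ℤ)) = ⊤)
    {k : ℕ} (a : Fin k → (Fin n → ℤ)) (haP : ∀ i, a i ∈ P)
    (hcomb : ∀ p ∈ P, ∃ c : Fin k → ℕ, p = ∑ i, c i • a i) :
    ∃ v ∈ P, ∀ u' : Fin n → ℤ, toQ n u' ∈ sigma n P → u' ≠ 0 → 1 ≤ pairZ n v u' := by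
  refine ⟨∑ i, a i, AddSubmonoid.sum_mem P fun i _ => haP i, ?_⟩
  intro u' hu' hu'0
  have hterm : ∀ i, 0 ≤ pairZ n (a i) u' :=
    fun i => pairZ_nonneg_of_mem_Psat n P (le_Psat n P (haP i)) hu'
  have hsum : pairZ n (∑ i, a i) u' = ∑ i, pairZ n (a i) u' := pairZ_sum_left n _ _ _
  have hnn : 0 ≤ pairZ n (∑ i, a i) u' := by
    rw [hsum]; exact Finset.sum_nonneg fun i _ => hterm i
  rcases hnn.lt_or_eq with h | h
  · omega
  · exfalso
    have hzero : ∀ i, pairZ n (a i) u' = 0 := by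
      intro i
      have := (Finset.sum_eq_zero_iff_of_nonneg (fun i _ => hterm i)).mp (hsum ▸ h.symm)
      exact this i (Finset.mem_univ i)
    have hallP : ∀ p ∈ P, pairZ n p u' = 0 := by
      intro p hp
      obtain ⟨c, rfl⟩ := hcomb p hp
      rw [pairZ_sum_left]
      apply Finset.sum_eq_zero
      intro i _
      rw [pairZ_nsmul_left, hzero i, mul_zero]
    have hallM : ∀ m : Fin n → ℤ, pairZ n m u' = 0 := by
      intro m
      obtain ⟨p, hp, q, hq, rfl⟩ := exists_diff n P hgen m
      rw [pairZ_sub_left, hallP p hp, hallP q hq, sub_zero]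
    apply hu'0
    have hself := hallM u'
    funext i
    have h1 : ∀ j ∈ Finset.univ, 0 ≤ u' j * u' j := fun j _ => mul_self_nonneg _
    have := (Finset.sum_eq_zero_iff_of_nonneg h1).mp hself i (Finset.mem_univ i)
    exact mul_self_eq_zero.mp this

/-- Gordan-type corollary: a single element of `P` translates all of `P_sat`
into `P`. -/
lemma exists_translator (hgen : AddSubgroup.closure (P : Set (Fin n → ℤ)) = ⊤)
    {k : ℕ} (a : Fin k → (Fin n → ℤ)) (haP : ∀ i, a i ∈ P)
    (hcomb : ∀ p ∈ P, ∃ c : Fin k → ℕ, p = ∑ i, c i • a i) :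
    ∃ c ∈ P, ∀ s ∈ Psat n P, c + s ∈ P := by
  classical
  set B : Fin n → ℤ := fun j => ∑ i, |a i j| with hB
  have hchoice : ∀ f : Fin n → ℤ, ∃ b, b ∈ P ∧ f + b ∈ P := by
    intro f
    obtain ⟨p, hp, q, hq, heq⟩ := exists_diff n P hgen f
    exact ⟨q, hq, by rw [heq, sub_add_cancel]; exact hp⟩
  choose bf hbfP hbfadd using hchoice
  set box : Finset (Fin n → ℤ) := Finset.Icc (-B) B with hbox
  refine ⟨∑ f ∈ box, bf f, AddSubmonoid.sum_mem P fun f _ => hbfP f, ?_⟩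
  intro s hs
  rw [mem_Psat_iff, mem_coneOf_int] at hs
  obtain ⟨k₀, hk₀, hk₀s⟩ := hs
  obtain ⟨c, hc⟩ := hcomb _ hk₀s
  set q : Fin n → ℤ := ∑ i, (c i / k₀) • a i with hq
  have hqP : q ∈ P := AddSubmonoid.sum_mem P fun i _ => AddSubmonoid.nsmul_mem P (haP i) _
  set s₀ : Fin n → ℤ := s - q with hs₀
  have hks₀ : k₀ • s₀ = ∑ i, (c i % k₀) • a i := by
    rw [hs₀, smul_sub, hc]
    rw [hq, Finset.smul_sum, ← Finset.sum_sub_distrib]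
    refine Finset.sum_congr rfl fun i _ => ?_
    rw [smul_smul]
    have hci : c i = k₀ * (c i / k₀) + c i % k₀ := (Nat.div_add_mod (c i) k₀).symm
    calc c i • a i - (k₀ * (c i / k₀)) • a i
        = ((k₀ * (c i / k₀) + c i % k₀) • a i) - (k₀ * (c i / k₀)) • a i := by rw [← hci]
      _ = (c i % k₀) • a i := by rw [add_smul]; abel
  have hs₀sat : s₀ ∈ Psat n P := by
    rw [mem_Psat_iff, mem_coneOf_int]
    exact ⟨k₀, hk₀, hks₀ ▸ AddSubmonoid.sum_mem P
      fun i _ => AddSubmonoid.nsmul_mem P (haP i) _⟩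
  have habs : ∀ j, |s₀ j| ≤ B j := by
    intro j
    have h1 : (k₀ : ℤ) * s₀ j = ∑ i, ((c i % k₀ : ℕ) : ℤ) * a i j := by
      have h0 := congrFun hks₀ j
      simp only [Pi.smul_apply, smul_eq_mul, Finset.sum_apply] at h0
      rw [show ((k₀ : ℤ)) * s₀ j = k₀ • s₀ j from by simp, h0]
      refine Finset.sum_congr rfl fun i _ => ?_
      simp [mul_comm]
    have h2 : |(k₀ : ℤ) * s₀ j| ≤ (k₀ : ℤ) * B j := by
      rw [h1]
      calc |∑ i, ((c i % k₀ : ℕ) : ℤ) * a i j| ≤ ∑ i, |((c i % k₀ : ℕ) : ℤ) * a i j| :=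
            Finset.abs_sum_le_sum_abs _ _
        _ ≤ ∑ i, (k₀ : ℤ) * |a i j| := by
            refine Finset.sum_le_sum fun i _ => ?_
            rw [abs_mul]
            have hmod : ((c i % k₀ : ℕ) : ℤ) ≤ (k₀ : ℤ) := by
              exact_mod_cast (Nat.mod_lt _ hk₀).le
            have habs0 : |((c i % k₀ : ℕ) : ℤ)| = ((c i % k₀ : ℕ) : ℤ) :=
              abs_of_nonneg (by positivity)
            rw [habs0]
            exact mul_le_mul_of_nonneg_right hmod (abs_nonneg _)
        _ = (k₀ : ℤ) * B j := by rw [hB, Finset.mul_sum]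
    rw [abs_mul, abs_of_nonneg (by positivity : (0:ℤ) ≤ (k₀:ℤ))] at h2
    have hk₀' : (0:ℤ) < (k₀ : ℤ) := by exact_mod_cast hk₀
    exact le_of_mul_le_mul_left h2 hk₀'
  have hs₀box : s₀ ∈ box := by
    rw [hbox, Finset.mem_Icc]
    constructor
    · intro j
      have := (abs_le.mp (habs j)).1
      simpa using this
    · intro j
      exact (abs_le.mp (habs j)).2
  have hsplit : (∑ f ∈ box, bf f) + s = (s₀ + bf s₀) + ((∑ f ∈ box.erase s₀, bf f) + q) := by
    rw [← Finset.add_sum_erase box bf hs₀box]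
    have : s = s₀ + q := by rw [hs₀, sub_add_cancel]
    rw [this]
    abel
  rw [hsplit]
  exact P.add_mem (hbfadd s₀) (P.add_mem
    (AddSubmonoid.sum_mem P fun f _ => hbfP f) hqP)

end Interior

end ToricML


namespace ToricML

section FinalHelpers
variable (n : ℕ) (P : AddSubmonoid (Fin n → ℤ))

lemma pairQ_sum_right {ι : Type*} (s : Finset ι) (f : ι → (Fin n → ℚ)) (y : Fin n → ℚ) :
    pairQ n y (∑ i ∈ s, f i) = ∑ i ∈ s, pairQ n y (f i) := by
  rw [pairQ_comm, pairQ_sum_left]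
  exact Finset.sum_congr rfl fun i _ => pairQ_comm n (f i) y

lemma sigma_zero_mem : (0 : Fin n → ℚ) ∈ sigma n P := by
  intro w _
  rw [pairQ_zero_right]

lemma sigma_sum_mem {ι : Type*} (s : Finset ι) (f : ι → (Fin n → ℚ))
    (hf : ∀ i ∈ s, f i ∈ sigma n P) : (∑ i ∈ s, f i) ∈ sigma n P := by
  classical
  induction s using Finset.induction with
  | empty => simpa using sigma_zero_mem n P
  | insert i s h ih =>
      rw [Finset.sum_insert h]
      exact sigma_add_mem n P (hf i (Finset.mem_insert_self i s))
        (ih fun j hj => hf j (Finset.mem_insert_of_mem hj))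

lemma extremal_sum {u : Fin n → ℚ}
    (hext : ∀ x ∈ sigma n P, ∀ y ∈ sigma n P, x + y ∈ rayOf n u →
      x ∈ rayOf n u ∧ y ∈ rayOf n u)
    {ι : Type*} (s : Finset ι) (f : ι → (Fin n → ℚ))
    (hf : ∀ i ∈ s, f i ∈ sigma n P) (hsum : (∑ i ∈ s, f i) ∈ rayOf n u) :
    ∀ i ∈ s, f i ∈ rayOf n u := by
  classical
  induction s using Finset.induction with
  | empty => intro i hi; exact absurd hi (Finset.notMem_empty i)
  | insert j s h ih =>
      rw [Finset.sum_insert h] at hsum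
      have h1 := hext (f j) (hf j (Finset.mem_insert_self j s))
        (∑ i ∈ s, f i) (sigma_sum_mem n P s f fun i hi => hf i (Finset.mem_insert_of_mem hi))
        hsum
      intro i hi
      rcases Finset.mem_insert.mp hi with rfl | hi'
      · exact h1.1
      · exact ih (fun i hi => hf i (Finset.mem_insert_of_mem hi)) h1.2 i hi'

end FinalHelpers

end ToricML

open ToricML in
theorem stmt_5 (K : Type) [Field K] [CharZero K] [IsAlgClosed K]
    (n : ℕ) (hn : 1 ≤ n) (P : AddSubmonoid (Fin n → ℤ))
    (hfg : P.FG) (hgen : AddSubgroup.closure (P : Set (Fin n → ℤ)) = ⊤)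
    (u : Fin n → ℤ) (hu : IsExtGenOfSigma n P u) :
    (∃ p : Fin n → ℤ, IsSatPoint n P p ∧ pairZ n p u = 0)
      ↔ ∃ e : Fin n → ℤ, IsDemazureRoot n P u e ∧
          ∀ p ∈ P, p + e ∈ Psat n P → p + e ∈ P := by
  classical
  obtain ⟨k, a, haP, hcomb⟩ := exists_generators n P hfg
  have husig : toQ n u ∈ sigma n P := hu.2.2.1
  have hupr : IsPrimitive n u := hu.1
  have hune : toQ n u ≠ 0 := hu.2.1
  have hu0 : u ≠ 0 := fun h => hune (by rw [h, toQ_zero])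
  constructor
  · rintro ⟨p, ⟨hpP, hpsat⟩, hpu⟩
    obtain ⟨w, hw⟩ := exists_pairZ_eq_one n hupr
    obtain ⟨v, hvP, hvpos⟩ := exists_interior n P hgen a haP hcomb
    set Efin : Finset (Fin n → ℤ) := (ext_finite n P hgen a haP hcomb).toFinset with hEfin
    have hEfin_mem : ∀ {u' : Fin n → ℤ}, u' ∈ Efin ↔ IsExtGenOfSigma n P u' :=
      fun {u'} => Set.Finite.mem_toFinset _
    set E' : Finset (Fin n → ℤ) := Efin.erase u with hE'
    set k' : ℕ := E'.card with hk'
    set b : Fin k' → (Fin n → ℚ) :=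
      fun i => toQ n ((E'.equivFin.symm i) : Fin n → ℤ) with hb
    have hbQ : ∀ i, b i = toQ n ((E'.equivFin.symm i) : Fin n → ℤ) := fun i => rfl
    have hbext : ∀ i, IsExtGenOfSigma n P ((E'.equivFin.symm i) : Fin n → ℤ) := by
      intro i
      exact hEfin_mem.mp (Finset.mem_of_mem_erase (E'.equivFin.symm i).2)
    have hbneu : ∀ i, ((E'.equivFin.symm i) : Fin n → ℤ) ≠ u := by
      intro i
      exact Finset.ne_of_mem_erase (E'.equivFin.symm i).2
    have hbsig : ∀ i, b i ∈ sigma n P := fun i => (hbext i).2.2.1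
    have hnotcone : ¬∃ cc : Fin k' → ℚ, (∀ i, 0 ≤ cc i) ∧
        toQ n u = ∑ i, cc i • b i := by
      rintro ⟨cc, hccnn, hccsum⟩
      have hray : ∀ i, cc i • b i ∈ rayOf n (toQ n u) := by
        have h0 := extremal_sum n P hu.2.2.2 Finset.univ (fun i => cc i • b i)
          (fun i _ => sigma_smul_mem n P (hccnn i) (hbsig i))
          ⟨1, zero_le_one, by rw [one_smul]; exact hccsum.symm⟩
        intro i
        exact h0 i (Finset.mem_univ i)
      by_cases hex : ∃ i, 0 < cc i
      · obtain ⟨i, hi⟩ := hex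
        obtain ⟨cr, hcr, hcreq⟩ := hray i
        have heq : toQ n ((E'.equivFin.symm i) : Fin n → ℤ) = (cr / cc i) • toQ n u := by
          have h2 := congrArg (fun y => (cc i)⁻¹ • y) hcreq
          simp only [smul_smul, inv_mul_cancel₀ (ne_of_gt hi), one_smul] at h2
          rw [← hbQ i, h2, div_eq_inv_mul]
        have hcrpos : 0 < cr := by
          rcases hcr.lt_or_eq with h | h
          · exact h
          · exfalso
            apply (hbext i).2.1
            rw [heq, ← h, zero_div, zero_smul]
        exact hbneu i (prim_ray_eq n (u₁ := u)
          (u₂ := (E'.equivFin.symm i : Fin n → ℤ)) hupr (hbext i).1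
          (div_pos hcrpos hi) heq)
      · push_neg at hex
        apply hune
        rw [hccsum]
        apply Finset.sum_eq_zero
        intro i _
        have : cc i = 0 := le_antisymm (hex i) (hccnn i)
        rw [this, zero_smul]
    obtain ⟨v₁, hv₁, huv₁⟩ := farkas n k' b (toQ n u) hnotcone
    have hsep : ∀ i₀ : Fin k', ∃ y : Fin n → ℚ,
        (∀ i, 0 ≤ pairQ n (b i) y) ∧ 0 < pairQ n (b i₀) y := by
      intro i₀
      have hnc : ¬∃ cc : Fin k' → ℚ, (∀ i, 0 ≤ cc i) ∧ (-(b i₀)) = ∑ i, cc i • b i := by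
        rintro ⟨cc, hccnn, hccsum⟩
        have h1 : -(b i₀) ∈ sigma n P := by
          rw [hccsum]
          exact sigma_sum_mem n P _ _ (fun i _ => sigma_smul_mem n P (hccnn i) (hbsig i))
        exact (hbext i₀).2.1 (sigma_pointed n P hgen (b i₀) (hbsig i₀) h1)
      obtain ⟨y, h1, h2⟩ := farkas n k' b (-(b i₀)) hnc
      rw [pairQ_neg_left] at h2
      exact ⟨y, h1, by linarith⟩
    choose vv hvv1 hvv2 using hsep
    set v₂ : Fin n → ℚ := ∑ i, vv i with hv₂def
    have hv₂pos : ∀ i₀, 0 < pairQ n (b i₀) v₂ := by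
      intro i₀
      rw [hv₂def, pairQ_sum_right]
      exact Finset.sum_pos' (fun j _ => hvv1 j i₀) ⟨i₀, Finset.mem_univ i₀, hvv2 i₀⟩
    set α₁ : ℚ := pairQ n (toQ n u) v₁ with hα₁
    have hα₁neg : α₁ < 0 := huv₁
    set β : ℚ := pairQ n (toQ n u) v₂ with hβ
    set t : ℚ := if 0 < β then (-α₁) / (2 * β) else 1 with ht
    have htpos : 0 < t := by
      rw [ht]
      split_ifs with hcase
      · apply div_pos (by linarith) (by linarith)
      · exact one_pos
    set e' : Fin n → ℚ := v₁ + t • v₂ with he'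
    have he'u : pairQ n (toQ n u) e' < 0 := by
      rw [he', pairQ_add_right, pairQ_smul_right, ← hα₁, ← hβ]
      rw [ht]
      split_ifs with hcase
      · have hβne : β ≠ 0 := ne_of_gt hcase
        have : (-α₁) / (2 * β) * β = -α₁ / 2 := by field_simp
        rw [this]
        linarith
      · push_neg at hcase
        nlinarith
    have he'b : ∀ i, 0 < pairQ n (b i) e' := by
      intro i
      rw [he', pairQ_add_right, pairQ_smul_right]
      have := hv₁ i
      have := hv₂pos i
      nlinarith
    have he'0 : e' ≠ 0 := by
      intro h
      rw [h, pairQ_zero_right] at he'u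
      exact absurd he'u (lt_irrefl 0)
    obtain ⟨e₃, c₃, hc₃, he₃, hprim₃⟩ := exists_primitive n he'0
    have he₃u : pairZ n e₃ u < 0 := by
      have h2 : pairQ n (toQ n u) (toQ n e₃) < 0 := by
        rw [he₃, pairQ_smul_right]
        exact mul_neg_of_pos_of_neg hc₃ he'u
      rw [pairQ_comm, pairQ_toQ] at h2
      exact_mod_cast h2
    have he₃b : ∀ i, 1 ≤ pairZ n e₃ ((E'.equivFin.symm i) : Fin n → ℤ) := by
      intro i
      have h1 : 0 < pairQ n (b i) (toQ n e₃) := by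
        rw [he₃, pairQ_smul_right]
        exact mul_pos hc₃ (he'b i)
      rw [hbQ i, pairQ_comm, pairQ_toQ] at h1
      have h2 : (0:ℤ) < pairZ n e₃ (E'.equivFin.symm i : Fin n → ℤ) := by exact_mod_cast h1
      omega
    set k₃ : ℤ := -pairZ n e₃ u with hk₃
    have hk₃1 : 1 ≤ k₃ := by omega
    have he₃u' : pairZ n e₃ u = -k₃ := by omega
    set dv : ℤ := pairZ n v u with hdv
    have hdv1 : 1 ≤ dv := hvpos u husig hu0
    set f : Fin n → ℤ := dv • e₃ + k₃ • v with hf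
    have hfu : pairZ n f u = 0 := by
      rw [hf, pairZ_add_left, pairZ_zsmul_left, pairZ_zsmul_left, he₃u', ← hdv]
      ring
    have hfpos : ∀ u'', IsExtGenOfSigma n P u'' → u'' ≠ u → 1 ≤ pairZ n f u'' := by
      intro u'' hext'' hne''
      have hmem : u'' ∈ E' := Finset.mem_erase.mpr ⟨hne'', hEfin_mem.mpr hext''⟩
      set i : Fin k' := E'.equivFin ⟨u'', hmem⟩ with hi
      have hbi : (E'.equivFin.symm i : Fin n → ℤ) = u'' := by rw [hi]; simp
      have h1 : 1 ≤ pairZ n e₃ u'' := by rw [← hbi]; exact he₃b i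
      have h2 : 1 ≤ pairZ n v u'' :=
        hvpos u'' hext''.2.2.1 (fun h0 => hext''.2.1 (by rw [h0, toQ_zero]))
      rw [hf, pairZ_add_left, pairZ_zsmul_left, pairZ_zsmul_left]
      nlinarith
    set N : ℕ := Efin.sup (fun u'' => (-(pairZ n (-w) u'')).toNat) with hN
    have hm₀u : pairZ n (-w) u = -1 := by rw [pairZ_neg_left, hw]
    have hNbound : ∀ u'' ∈ Efin, -(N:ℤ) ≤ pairZ n (-w) u'' := by
      intro u'' hu''
      have h1 : (-(pairZ n (-w) u'')).toNat ≤ N :=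
        Finset.le_sup (f := fun u'' => (-(pairZ n (-w) u'')).toNat) hu''
      have h2 : -(pairZ n (-w) u'') ≤ ((-(pairZ n (-w) u'')).toNat : ℤ) := Int.self_le_toNat _
      have h3 : (((-(pairZ n (-w) u'')).toNat : ℕ) : ℤ) ≤ (N : ℤ) := by exact_mod_cast h1
      omega
    set e : Fin n → ℤ := p + -w + (N : ℤ) • f with he
    have hcompute : ∀ u'', pairZ n e u''
        = pairZ n p u'' + pairZ n (-w) u'' + (N:ℤ) * pairZ n f u'' := by
      intro u''
      rw [he, pairZ_add_left, pairZ_add_left, pairZ_zsmul_left]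
    have heu : pairZ n e u = -1 := by
      rw [hcompute, hpu, hm₀u, hfu]
      ring
    have heother : ∀ u'', IsExtGenOfSigma n P u'' → u'' ≠ u → 0 ≤ pairZ n e u'' := by
      intro u'' h'' hne''
      rw [hcompute]
      have h1 : 0 ≤ pairZ n p u'' :=
        pairZ_nonneg_of_mem_Psat n P (le_Psat n P hpP) h''.2.2.1
      have h2 := hNbound u'' (hEfin_mem.mpr h'')
      have h3 := hfpos u'' h'' hne''
      nlinarith
    refine ⟨e, ⟨hu, heu, heother⟩, ?_⟩
    intro q hq hqe
    have hs' : q + -w + (N:ℤ) • f ∈ Psat n P := by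
      apply key_mem_Psat n P hgen a haP hcomb
      intro u'' h''
      have hcompute2 : pairZ n (q + -w + (N:ℤ) • f) u''
          = pairZ n q u'' + pairZ n (-w) u'' + (N:ℤ) * pairZ n f u'' := by
        rw [pairZ_add_left, pairZ_add_left, pairZ_zsmul_left]
      rw [hcompute2]
      by_cases hne'' : u'' = u
      · subst hne''
        have h1 : 0 ≤ pairZ n (q + e) u'' := pairZ_nonneg_of_mem_Psat n P hqe h''.2.2.1
        rw [pairZ_add_left, heu] at h1
        rw [hm₀u, hfu]
        linarith
      · have h1 : 0 ≤ pairZ n q u'' :=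
          pairZ_nonneg_of_mem_Psat n P (le_Psat n P hq) h''.2.2.1
        have h2 := hNbound u'' (hEfin_mem.mpr h'')
        have h3 := hfpos u'' h'' hne''
        nlinarith
    have hfinal := hpsat _ hs'
    have hre : p + (q + -w + (N:ℤ) • f) = q + e := by
      rw [he]
      abel
    rwa [hre] at hfinal
  · rintro ⟨e, ⟨hroot1, hroot2, hroot3⟩, hres⟩
    obtain ⟨c, hcP, hctrans⟩ := exists_translator n P hgen a haP hcomb
    have hstep : ∀ q ∈ P, 1 ≤ pairZ n q u → q + e ∈ P := by
      intro q hq hq1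
      apply hres q hq
      apply key_mem_Psat n P hgen a haP hcomb
      intro u'' hu''
      rw [pairZ_add_left]
      by_cases h : u'' = u
      · subst h
        rw [hroot2]
        omega
      · have h1 := pairZ_nonneg_of_mem_Psat n P (le_Psat n P hq) hu''.2.2.1
        have h2 := hroot3 u'' hu'' h
        omega
    have hiter : ∀ (j : ℕ) (q : Fin n → ℤ), q ∈ P → (j : ℤ) ≤ pairZ n q u →
        q + (j : ℤ) • e ∈ P := by
      intro j
      induction j with
      | zero => intro q hq _; simpa using hq
      | succ j ih =>
          intro q hq hle
          have hle' : (j : ℤ) ≤ pairZ n q u := by push_cast at hle ⊢; linarith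
          have h1 : q + (j : ℤ) • e ∈ P := ih q hq hle'
          have h2 : pairZ n (q + (j : ℤ) • e) u = pairZ n q u - j := by
            rw [pairZ_add_left, pairZ_zsmul_left, hroot2]
            ring
          have h3 : 1 ≤ pairZ n (q + (j : ℤ) • e) u := by
            rw [h2]
            push_cast at hle
            linarith
          have h4 := hstep _ h1 h3
          have h5 : q + ((j:ℕ) + 1 : ℤ) • e = (q + (j : ℤ) • e) + e := by
            rw [add_smul, one_smul, ← add_assoc]
          rw [show ((j + 1 : ℕ) : ℤ) = ((j : ℕ) + 1 : ℤ) from by push_cast; ring, h5]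
          exact h4
    set d : ℤ := pairZ n c u with hd
    have hd0 : 0 ≤ d := pairZ_nonneg_of_mem_Psat n P (le_Psat n P hcP) husig
    have hdt : ((d.toNat : ℕ) : ℤ) = d := Int.toNat_of_nonneg hd0
    refine ⟨c + (d.toNat : ℤ) • e, ⟨?_, ?_⟩, ?_⟩
    · exact hiter d.toNat c hcP (by rw [hdt])
    · intro s hs
      have h1 : c + s ∈ P := hctrans s hs
      have h2 : 0 ≤ pairZ n s u := pairZ_nonneg_of_mem_Psat n P hs husig
      have h3 : ((d.toNat : ℕ) : ℤ) ≤ pairZ n (c + s) u := by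
        rw [hdt, pairZ_add_left]
        linarith
      have h4 := hiter d.toNat (c + s) h1 h3
      have h5 : c + (d.toNat : ℤ) • e + s = (c + s) + (d.toNat : ℤ) • e := by abel
      rw [h5]
      exact h4
    · rw [pairZ_add_left, pairZ_zsmul_left, hroot2, hdt]
      ring
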